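/- arXiv:1610.05365 — 5 statements merged into one kernel-verified Lean document; each statement's English description precedes it below -/
import Mathlib

section
/- Every non-Abelian Lie algebra containing a codimension 1 Abelian subalgebra also contains a codimension 1 Abelian ideal. -/
/-- A Lie algebra is almost Abelian if it is non-Abelian and possesses an Abelian ideal of
codimension 1 (as an `F`-vector subspace). -/
def IsAlmostAbelian (F L : Type*) [Field F] [LieRing L] [LieAlgebra F L] : Prop :=
  ¬IsLieAbelian L ∧
    ∃ I : LieIdeal F L, IsLieAbelian I ∧ Module.rank F (L ⧸ I.toSubmodule) = 1

/-!
Write `S = ker f` for a linear functional `f`. If `S` is not an ideal, choose `x` and `s ∈ S` with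
`⁅x, s⁆ ∉ S`. Since `S` is abelian, the Jacobi identity gives `f x • ⁅⁅x, s⁆, t⁆ = f ⁅x, t⁆ • ⁅x, s⁆`
for `t ∈ S`, so `y = ⁅x, s⁆` satisfies `⁅y, L⁆ ⊆ F ∙ y` with `ad y ≠ 0`. Then the centralizer of `y`
is an ideal of codimension one, and it is abelian because it is spanned by `y` and the elements of
`S` commuting with `y`.
-/

open LinearMap Submodule

section Dual

variable {F V : Type*} [Field F] [AddCommGroup V] [Module F V]

theorem exists_dual_ker_eq_of_rank_quotient_eq_one {S : Submodule F V}
    (h : Module.rank F (V ⧸ S) = 1) : ∃ f : Module.Dual F V, ker f = S := by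
  have hfin : Module.finrank F (V ⧸ S) = 1 := Module.rank_eq_one_iff_finrank_eq_one.mp h
  have : FiniteDimensional F (V ⧸ S) := Module.finite_of_finrank_eq_succ hfin
  let e := LinearEquiv.ofFinrankEq (V ⧸ S) F (hfin.trans (Module.finrank_self F).symm)
  exact ⟨e.toLinearMap ∘ₗ S.mkQ, by simp [ker_comp]⟩

theorem sub_div_smul_mem_ker (f : Module.Dual F V) {y : V} (hy : f y ≠ 0) (v : V) :
    v - (f v / f y) • y ∈ ker f := by
  simp [hy]

end Dual

theorem lie_lie_comm_of_lie_eq_zero {L : Type*} [LieRing L] {s t : L} (h : ⁅s, t⁆ = 0) (x : L) :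
    ⁅⁅x, s⁆, t⁆ = ⁅⁅x, t⁆, s⁆ := by
  have := leibniz_lie x s t
  rw [h, lie_zero, ← lie_skew s] at this
  rw [← sub_eq_zero, sub_eq_add_neg, ← this]

section Centralizer

variable {F L : Type*} [Field F] [LieRing L] [LieAlgebra F L]

def centralizerLieIdeal (y : L) (hy : ∀ l : L, ⁅y, l⁆ ∈ F ∙ y) : LieIdeal F L where
  toSubmodule := ker (LieAlgebra.ad F L y)
  lie_mem {l i} hi := by
    obtain ⟨c, hc⟩ := mem_span_singleton.mp (hy l)
    change ⁅y, i⁆ = 0 at hi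
    change ⁅y, ⁅l, i⁆⁆ = 0
    rw [leibniz_lie, hi, lie_zero, add_zero, ← hc, smul_lie, hi, smul_zero]

theorem rank_quotient_centralizerLieIdeal {y z : L} (hy : ∀ l : L, ⁅y, l⁆ ∈ F ∙ y)
    (hz : ⁅y, z⁆ ≠ 0) : Module.rank F (L ⧸ (centralizerLieIdeal y hy).toSubmodule) = 1 := by
  change Module.rank F (L ⧸ ker (LieAlgebra.ad F L y)) = 1
  rw [(LieAlgebra.ad F L y).quotKerEquivRange.rank_eq, rank_submodule_eq_one_iff]
  obtain ⟨c, hc⟩ := mem_span_singleton.mp (hy z)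
  have hc0 : c ≠ 0 := by
    rintro rfl
    exact hz (by rw [← hc, zero_smul])
  refine ⟨y, ⟨c⁻¹ • z, by simp [← hc, hc0]⟩, ?_, ?_⟩
  · rintro rfl
    exact hz (zero_lie z)
  · rintro _ ⟨l, rfl⟩
    exact hy l

variable (f : Module.Dual F L) (hS : ∀ a ∈ ker f, ∀ b ∈ ker f, ⁅a, b⁆ = 0)
include hS

theorem smul_lie_lie_eq_smul_lie {x s t : L} (hs : s ∈ ker f) (ht : t ∈ ker f) :
    f x • ⁅⁅x, s⁆, t⁆ = f ⁅x, t⁆ • ⁅x, s⁆ := by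
  have hmem : f x • ⁅x, t⁆ - f ⁅x, t⁆ • x ∈ ker f := by simp [mul_comm]
  have h := hS _ hmem s hs
  rw [sub_lie, smul_lie, smul_lie, sub_eq_zero] at h
  rw [lie_lie_comm_of_lie_eq_zero (hS s hs t ht), h]

theorem lie_lie_mem_span_singleton {x s : L} (hs : s ∈ ker f) (hxs : f ⁅x, s⁆ ≠ 0) (l : L) :
    ⁅⁅x, s⁆, l⁆ ∈ F ∙ ⁅x, s⁆ := by
  have hx : f x ≠ 0 := fun hx => hxs (by rw [hS x hx s hs, map_zero])
  set y := ⁅x, s⁆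
  set t := l - (f l / f y) • y
  have ht : t ∈ ker f := sub_div_smul_mem_ker f hxs l
  have hyl : ⁅y, l⁆ = ⁅y, t⁆ := by simp [t, lie_sub, lie_smul]
  rw [hyl, mem_span_singleton]
  exact ⟨(f x)⁻¹ * f ⁅x, t⁆, by
    rw [mul_smul, ← smul_lie_lie_eq_smul_lie f hS hs ht, inv_smul_smul₀ hx]⟩

theorem lie_lie_self_ne_zero {x s : L} (hs : s ∈ ker f) (hxs : f ⁅x, s⁆ ≠ 0) :
    ⁅⁅x, s⁆, s⁆ ≠ 0 := by
  intro h
  have := smul_lie_lie_eq_smul_lie f hS (x := x) hs hs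
  rw [h, smul_zero, eq_comm, smul_eq_zero] at this
  exact this.elim hxs fun hy => hxs (by rw [hy, map_zero])

theorem lie_eq_zero_of_lie_eq_zero {y p q : L} (hy : f y ≠ 0) (hp : ⁅y, p⁆ = 0)
    (hq : ⁅y, q⁆ = 0) : ⁅p, q⁆ = 0 := by
  have hpq := hS _ (sub_div_smul_mem_ker f hy p) _ (sub_div_smul_mem_ker f hy q)
  rw [sub_lie, lie_sub, lie_sub, smul_lie, lie_smul, lie_smul, ← lie_skew p y] at hpq
  simpa [hp, hq] using hpq

theorem isLieAbelian_centralizerLieIdeal {y : L} (hy0 : f y ≠ 0) (hy : ∀ l : L, ⁅y, l⁆ ∈ F ∙ y) :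
    IsLieAbelian (centralizerLieIdeal y hy) :=
  ⟨fun p q => Subtype.ext (lie_eq_zero_of_lie_eq_zero f hS hy0 p.2 q.2)⟩

end Centralizer

theorem stmt0_general (F L : Type*) [Field F] [LieRing L] [LieAlgebra F L]
    (S : LieSubalgebra F L) (hS : IsLieAbelian S)
    (hcod : Module.rank F (L ⧸ S.toSubmodule) = 1) :
    ∃ I : LieIdeal F L, IsLieAbelian I ∧ Module.rank F (L ⧸ I.toSubmodule) = 1 := by
  have hSab : ∀ a ∈ S, ∀ b ∈ S, ⁅a, b⁆ = 0 := fun a ha b hb =>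
    congrArg Subtype.val (hS.trivial ⟨a, ha⟩ ⟨b, hb⟩)
  by_cases hideal : ∀ l s : L, s ∈ S → ⁅l, s⁆ ∈ S
  · exact ⟨{ S.toSubmodule with lie_mem := fun hs => hideal _ _ hs },
      ⟨fun a b => Subtype.ext (hSab a a.2 b b.2)⟩, hcod⟩
  push Not at hideal
  obtain ⟨x, s, hs, hxs⟩ := hideal
  obtain ⟨f, hf⟩ := exists_dual_ker_eq_of_rank_quotient_eq_one hcod
  have hker : ∀ a ∈ ker f, ∀ b ∈ ker f, ⁅a, b⁆ = 0 := by
    simpa only [hf, LieSubalgebra.mem_toSubmodule] using hSab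
  have hs' : s ∈ ker f := hf ▸ hs
  have hy0 : f ⁅x, s⁆ ≠ 0 := fun h => hxs (by rwa [← LieSubalgebra.mem_toSubmodule, ← hf])
  have hy := lie_lie_mem_span_singleton f hker hs' hy0
  exact ⟨centralizerLieIdeal _ hy, isLieAbelian_centralizerLieIdeal f hker hy0 hy,
    rank_quotient_centralizerLieIdeal hy (lie_lie_self_ne_zero f hker hs' hy0)⟩

/-- Every non-Abelian Lie algebra containing a codimension 1 Abelian subalgebra also contains a
codimension 1 Abelian ideal. -/
theorem stmt0 (F L : Type*) [Field F] [LieRing L] [LieAlgebra F L]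
    (hna : ¬IsLieAbelian L) (S : LieSubalgebra F L) (hS : IsLieAbelian S)
    (hcod : Module.rank F (L ⧸ S.toSubmodule) = 1) :
    ∃ I : LieIdeal F L, IsLieAbelian I ∧ Module.rank F (L ⧸ I.toSubmodule) = 1 :=
  stmt0_general F L S hS hcod
end

section
/- Let L = F e₀ ⋉ V be an almost Abelian Lie algebra and e₁ ∈ e₀ + V, W ⊆ V a subspace. Then F e₁ ⊕ W is a Lie subalgebra of L if and only if ad_{e₀}(W) ⊆ W. -/
variable {F : Type*} [Field F] {V : Type*} [AddCommGroup V] [Module F V]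

/-- The almost Abelian Lie algebra `F e₀ ⋉ V` determined by the operator `T = ad_{e₀}|_V`:
the underlying vector space is `F × V`, with bracket `[(t,v),(s,w)] = (0, t • T w - s • T v)`. -/
def AA (F V : Type*) [Field F] [AddCommGroup V] [Module F V] (_T : Module.End F V) : Type _ :=
  F × V

namespace AA

variable {T : Module.End F V}

instance : AddCommGroup (AA F V T) := inferInstanceAs (AddCommGroup (F × V))
instance : Module F (AA F V T) := inferInstanceAs (Module F (F × V))

instance : LieRing (AA F V T) where
  bracket := fun (x y : F × V) => (((0 : F), x.1 • T y.2 - y.1 • T x.2) : F × V)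
  add_lie := by
    rintro ⟨a, u⟩ ⟨b, v⟩ ⟨c, w⟩
    show (((0 : F), (a + b) • T w - c • T (u + v)) : F × V)
      = (((0 : F), a • T w - c • T u) : F × V) + (((0 : F), b • T w - c • T v) : F × V)
    ext
    · simp
    · show (a + b) • T w - c • T (u + v) = (a • T w - c • T u) + (b • T w - c • T v)
      simp only [map_add, smul_add, add_smul]
      module
  lie_add := by
    rintro ⟨a, u⟩ ⟨b, v⟩ ⟨c, w⟩
    show (((0 : F), a • T (v + w) - (b + c) • T u) : F × V)
      = (((0 : F), a • T v - b • T u) : F × V) + (((0 : F), a • T w - c • T u) : F × V)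
    ext
    · simp
    · show a • T (v + w) - (b + c) • T u = (a • T v - b • T u) + (a • T w - c • T u)
      simp only [map_add, smul_add, add_smul]
      module
  lie_self := by
    rintro ⟨a, u⟩
    show (((0 : F), a • T u - a • T u) : F × V) = (0 : F × V)
    ext
    · simp
    · show a • T u - a • T u = (0 : V)
      simp
  leibniz_lie := by
    rintro ⟨a, u⟩ ⟨b, v⟩ ⟨c, w⟩
    show (((0 : F), a • T (b • T w - c • T v) - (0 : F) • T u) : F × V)
      = (((0 : F), (0 : F) • T w - c • T (a • T v - b • T u)) : F × V)
        + (((0 : F), b • T (a • T w - c • T u) - (0 : F) • T v) : F × V)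
    ext
    · simp
    · show a • T (b • T w - c • T v) - (0 : F) • T u
        = ((0 : F) • T w - c • T (a • T v - b • T u)) + (b • T (a • T w - c • T u) - (0 : F) • T v)
      simp only [map_sub, map_smul, zero_smul, smul_sub, smul_smul]
      module

instance : LieAlgebra F (AA F V T) where
  lie_smul := by
    rintro r ⟨a, u⟩ ⟨b, v⟩
    show (((0 : F), a • T (r • v) - (r • b) • T u) : F × V)
      = r • (((0 : F), a • T v - b • T u) : F × V)
    ext
    · simp
    · show a • T (r • v) - (r • b) • T u = r • (a • T v - b • T u)
      simp only [map_smul, smul_sub, smul_smul, smul_eq_mul]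
      module

/-- The distinguished element `e₀`. -/
def e0 (T : Module.End F V) : AA F V T := ((1, 0) : F × V)

/-- The inclusion of the Abelian ideal `V` into `F e₀ ⋉ V`. -/
def incl (T : Module.End F V) : V →ₗ[F] AA F V T where
  toFun v := ((0, v) : F × V)
  map_add' u v := by
    show (((0 : F), u + v) : F × V) = (((0 : F), u) : F × V) + (((0 : F), v) : F × V)
    ext <;> simp
  map_smul' r v := by
    show (((0 : F), r • v) : F × V) = r • (((0 : F), v) : F × V)
    ext <;> simp

@[simp] lemma bracket_e0_incl (v : V) : ⁅e0 T, incl T v⁆ = incl T (T v) := by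
  show (((0 : F), (1 : F) • T v - (0 : F) • T (0 : V)) : F × V) = (((0 : F), T v) : F × V)
  ext <;> simp

end AA

/-! Because `V` is Abelian, the bracket of `a e₁ + w` and `b e₁ + w'` is `a T w' - b T w`, which lies
in `W` when `W` is `T`-invariant. Conversely `[e₁, w] = T w`, and an element of `V` lying in
`F e₁ ⊕ W` has zero `e₁`-coefficient, so it lies in `W`. -/

namespace AA

variable {T : Module.End F V}

lemma bracket_incl_incl (v w : V) : ⁅incl T v, incl T w⁆ = 0 := by
  show (((0 : F), (0 : F) • T w - (0 : F) • T v) : F × V) = (0 : F × V)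
  ext <;> simp

lemma smul_e0_add_incl_eq_incl_iff {a : F} {v w : V} :
    a • e0 T + incl T v = incl T w ↔ a = 0 ∧ v = w := by
  show ((a • (1 : F) + 0, a • (0 : V) + v) : F × V) = (0, w) ↔ _
  simp

lemma bracket_e0_add_incl_incl (u w : V) : ⁅e0 T + incl T u, incl T w⁆ = incl T (T w) := by
  rw [add_lie, bracket_e0_incl, bracket_incl_incl, add_zero]

lemma bracket_smul_add_incl (u w w' : V) (a b : F) :
    ⁅a • (e0 T + incl T u) + incl T w, b • (e0 T + incl T u) + incl T w'⁆ =
      incl T (a • T w' - b • T w) := by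
  have hright := bracket_e0_add_incl_incl (T := T) u w'
  have hleft : ⁅incl T w, e0 T + incl T u⁆ = -incl T (T w) := by
    rw [← lie_skew, bracket_e0_add_incl_incl]
  generalize e0 T + incl T u = e at hright hleft
  simp only [add_lie, lie_add, smul_lie, lie_smul, lie_self, hright, hleft, bracket_incl_incl,
    map_sub, map_smul]
  module

lemma mem_span_singleton_sup_map_incl {u : V} {W : Submodule F V} {x : AA F V T} :
    x ∈ Submodule.span F {e0 T + incl T u} ⊔ W.map (incl T) ↔
      ∃ a : F, ∃ w ∈ W, x = a • (e0 T + incl T u) + incl T w := by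
  simp only [Submodule.mem_sup, Submodule.mem_span_singleton, Submodule.mem_map]
  constructor
  · rintro ⟨_, ⟨a, rfl⟩, _, ⟨w, hw, rfl⟩, rfl⟩
    exact ⟨a, w, hw, rfl⟩
  · rintro ⟨a, w, hw, rfl⟩
    exact ⟨_, ⟨a, rfl⟩, _, ⟨w, hw, rfl⟩, rfl⟩

lemma incl_mem_span_singleton_sup_map_incl_iff {u v : V} {W : Submodule F V} :
    incl T v ∈ Submodule.span F {e0 T + incl T u} ⊔ W.map (incl T) ↔ v ∈ W := by
  refine ⟨fun hv ↦ ?_, fun hv ↦ Submodule.mem_sup_right ⟨v, hv, rfl⟩⟩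
  obtain ⟨a, w, hw, hvw⟩ := mem_span_singleton_sup_map_incl.mp hv
  rw [smul_add, add_assoc, ← map_smul, ← map_add, eq_comm, smul_e0_add_incl_eq_incl_iff] at hvw
  obtain ⟨rfl, hv⟩ := hvw
  simpa [← hv] using hw

lemma lie_mem_span_singleton_sup_map_incl {u : V} {W : Submodule F V} (hW : ∀ w ∈ W, T w ∈ W)
    {x y : AA F V T} (hx : x ∈ Submodule.span F {e0 T + incl T u} ⊔ W.map (incl T))
    (hy : y ∈ Submodule.span F {e0 T + incl T u} ⊔ W.map (incl T)) :
    ⁅x, y⁆ ∈ Submodule.span F {e0 T + incl T u} ⊔ W.map (incl T) := by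
  obtain ⟨a, w, hw, rfl⟩ := mem_span_singleton_sup_map_incl.mp hx
  obtain ⟨b, w', hw', rfl⟩ := mem_span_singleton_sup_map_incl.mp hy
  rw [bracket_smul_add_incl]
  exact Submodule.mem_sup_right
    ⟨_, W.sub_mem (W.smul_mem a (hW w' hw')) (W.smul_mem b (hW w hw)), rfl⟩

end AA

theorem stmt5_general (F V : Type*) [Field F] [AddCommGroup V] [Module F V]
    (T : Module.End F V) (u : V) (W : Submodule F V) :
    (∃ S : LieSubalgebra F (AA F V T),
        S.toSubmodule = Submodule.span F {AA.e0 T + AA.incl T u} ⊔ W.map (AA.incl T)) ↔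
      ∀ w ∈ W, T w ∈ W := by
  constructor
  · rintro ⟨S, hS⟩ w hw
    have he1 : AA.e0 T + AA.incl T u ∈ S.toSubmodule :=
      hS ▸ Submodule.mem_sup_left (Submodule.mem_span_singleton_self _)
    have hw' : AA.incl T w ∈ S.toSubmodule := hS ▸ Submodule.mem_sup_right ⟨w, hw, rfl⟩
    have hTw : AA.incl T (T w) ∈ S.toSubmodule :=
      AA.bracket_e0_add_incl_incl (T := T) u w ▸ S.lie_mem he1 hw'
    rwa [hS, AA.incl_mem_span_singleton_sup_map_incl_iff] at hTw
  · exact fun hTW ↦ ⟨⟨_, AA.lie_mem_span_singleton_sup_map_incl hTW⟩, rfl⟩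

/-- For `e₁ = e₀ + u ∈ e₀ + V` and a subspace `W ⊆ V`, the subspace `F e₁ ⊕ W` is a Lie
subalgebra of `L = F e₀ ⋉ V` iff `ad_{e₀} W ⊆ W`. -/
theorem stmt5 (F V : Type*) [Field F] [AddCommGroup V] [Module F V]
    (T : Module.End F V) (hT : T ≠ 0) (u : V) (W : Submodule F V) :
    (∃ S : LieSubalgebra F (AA F V T),
        S.toSubmodule = Submodule.span F {AA.e0 T + AA.incl T u} ⊔ W.map (AA.incl T)) ↔
      ∀ w ∈ W, T w ∈ W :=
  stmt5_general F V T u W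
end

section
/- Let L = F e₀ ⋉ V be an almost Abelian Lie algebra, e₁ ∈ e₀ + V, and W ⊆ V a subspace. Then F e₁ ⊕ W is an ideal of L if and only if ad_{e₀}(V) ⊆ W. -/
variable {F : Type*} [Field F] {V : Type*} [AddCommGroup V] [Module F V]

namespace AA

variable {T : Module.End F V}

lemma fst_e0_add_incl (u : V) : (e0 T + incl T u).1 = 1 := add_zero 1

lemma incl_injective : Function.Injective (incl T) :=
  fun _ _ h => congrArg Prod.snd h

lemma incl_lie_e0_add_incl (u v : V) : ⁅incl T v, e0 T + incl T u⁆ = -incl T (T v) := by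
  show (((0 : F), (0 : F) • T ((0 : V) + u) - ((1 : F) + 0) • T v) : F × V) = ((-0 : F), -T v)
  simp

lemma lie_mem_map_incl {W : Submodule F V} (hW : ∀ v, T v ∈ W) (x y : AA F V T) :
    ⁅x, y⁆ ∈ W.map (incl T) :=
  ⟨x.1 • T y.2 - y.1 • T x.2, W.sub_mem (W.smul_mem _ (hW _)) (W.smul_mem _ (hW _)), rfl⟩

lemma incl_mem_span_sup_map_incl_iff {x : AA F V T} (hx : x.1 ≠ 0) (W : Submodule F V) (v : V) :
    incl T v ∈ Submodule.span F {x} ⊔ W.map (incl T) ↔ v ∈ W := by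
  refine ⟨fun hv => ?_, fun hv => Submodule.mem_sup_right (Submodule.mem_map_of_mem hv)⟩
  obtain ⟨_, hcx, _, ⟨w, hw, rfl⟩, hsum⟩ := Submodule.mem_sup.1 hv
  obtain ⟨c, rfl⟩ := Submodule.mem_span_singleton.1 hcx
  have hc : c = 0 := by
    have hfst : c * x.1 + 0 = 0 := congrArg Prod.fst hsum
    simpa [hx] using hfst
  rw [hc, zero_smul, zero_add] at hsum
  exact incl_injective hsum ▸ hw

end AA

theorem stmt6_general (F V : Type*) [Field F] [AddCommGroup V] [Module F V]
    (T : Module.End F V) (u : V) (W : Submodule F V) :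
    (∃ I : LieIdeal F (AA F V T),
        I.toSubmodule = Submodule.span F {AA.e0 T + AA.incl T u} ⊔ W.map (AA.incl T)) ↔
      ∀ v : V, T v ∈ W := by
  have he₁ : (AA.e0 T + AA.incl T u).1 ≠ 0 := AA.fst_e0_add_incl (T := T) u ▸ one_ne_zero
  constructor
  · rintro ⟨I, hI⟩ v
    have he₁I : AA.e0 T + AA.incl T u ∈ I := by
      rw [← LieSubmodule.mem_toSubmodule, hI]
      exact Submodule.mem_sup_left (Submodule.mem_span_singleton_self _)
    have hTv : AA.incl T (T v) ∈ I := by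
      have hbracket : ⁅AA.incl T v, AA.e0 T + AA.incl T u⁆ ∈ I := I.lie_mem he₁I
      rwa [AA.incl_lie_e0_add_incl, neg_mem_iff] at hbracket
    rwa [← LieSubmodule.mem_toSubmodule, hI, AA.incl_mem_span_sup_map_incl_iff he₁] at hTv
  · intro hW
    exact ⟨{ Submodule.span F {AA.e0 T + AA.incl T u} ⊔ W.map (AA.incl T) with
      lie_mem := fun _ => Submodule.mem_sup_right (AA.lie_mem_map_incl hW _ _) }, rfl⟩

/-- For `e₁ = e₀ + u ∈ e₀ + V` and a subspace `W ⊆ V`, the subspace `F e₁ ⊕ W` is an ideal of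
`L = F e₀ ⋉ V` iff `ad_{e₀} V ⊆ W`. -/
theorem stmt6 (F V : Type*) [Field F] [AddCommGroup V] [Module F V]
    (T : Module.End F V) (hT : T ≠ 0) (u : V) (W : Submodule F V) :
    (∃ I : LieIdeal F (AA F V T),
        I.toSubmodule = Submodule.span F {AA.e0 T + AA.incl T u} ⊔ W.map (AA.incl T)) ↔
      ∀ v : V, T v ∈ W :=
  stmt6_general F V T u W
end

section
/- If an almost Abelian Lie algebra L decomposes as a direct sum of Lie ideals L = L₁ ⊕ L₂, then one of L₁, L₂ is almost Abelian and the other is Abelian. -/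
namespace Submodule

theorem rank_quotient_comap_subtype_of_codisjoint {R M : Type*} [Ring R] [AddCommGroup M]
    [Module R M] {N P : Submodule R M} (h : Codisjoint P N) :
    Module.rank R (P ⧸ N.comap P.subtype) = Module.rank R (M ⧸ N) := by
  have hsurj : Function.Surjective (N.mkQ.domRestrict P) :=
    (LinearMap.surjective_domRestrict_iff N.mkQ_surjective).mpr (by rwa [ker_mkQ])
  have hker : N.comap P.subtype = LinearMap.ker (N.mkQ.domRestrict P) := by
    rw [LinearMap.ker_domRestrict, ker_mkQ]
  rw [hker]
  exact (LinearMap.quotKerEquivOfSurjective _ hsurj).rank_eq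

theorem codisjoint_of_rank_quotient_eq_one {K V : Type*} [DivisionRing K] [AddCommGroup V]
    [Module K V] {N P : Submodule K V} (h : Module.rank K (V ⧸ N) = 1) (hP : ¬P ≤ N) :
    Codisjoint N P :=
  have : IsSimpleModule K (V ⧸ N) :=
    isSimpleModule_iff_finrank_eq_one.mpr (Module.rank_eq_one_iff_finrank_eq_one.mp h)
  (isSimpleModule_iff_isCoatom.mp this).not_le_iff_codisjoint.mp hP

end Submodule

namespace LieIdeal

variable {R L : Type*} [CommRing R] [LieRing L] [LieAlgebra R L]

theorem isLieAbelian_comap {L' : Type*} [LieRing L'] [LieAlgebra R L'] {f : L →ₗ⁅R⁆ L'}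
    (hf : f.ker = ⊥) {A : LieIdeal R L'} (hA : IsLieAbelian A) : IsLieAbelian (A.comap f) := by
  rw [LieSubmodule.lie_abelian_iff_lie_self_eq_bot] at hA ⊢
  refine eq_bot_iff.mpr ((comap_bracket_le f).trans ?_)
  rw [hA, ← hf]
  rfl

theorem isLieAbelian_iff_lie_top_top_eq_bot :
    IsLieAbelian L ↔ ⁅(⊤ : LieIdeal R L), (⊤ : LieIdeal R L)⁆ = ⊥ := by
  rw [← LieSubmodule.lie_abelian_iff_lie_self_eq_bot,
    lie_abelian_iff_equiv_lie_abelian (topEquiv (R := R) (L := L))]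

theorem lie_top_top_le_of_codisjoint {A P : LieIdeal R L} (hA : IsLieAbelian A)
    (hAP : Codisjoint A P) : ⁅(⊤ : LieIdeal R L), (⊤ : LieIdeal R L)⁆ ≤ P := by
  rw [LieSubmodule.lie_abelian_iff_lie_self_eq_bot] at hA
  rw [← codisjoint_iff.mp hAP, LieSubmodule.sup_lie, LieSubmodule.lie_sup, hA, bot_sup_eq]
  exact sup_le (LieSubmodule.lie_le_right P A) (LieSubmodule.lie_le_left P (A ⊔ P))

theorem isLieAbelian_of_codisjoint_of_disjoint {A P Q : LieIdeal R L} (hA : IsLieAbelian A)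
    (hAP : Codisjoint A P) (hPQ : Disjoint P Q) : IsLieAbelian Q := by
  rw [LieSubmodule.lie_abelian_iff_lie_self_eq_bot, eq_bot_iff, ← disjoint_iff.mp hPQ]
  exact le_inf ((LieSubmodule.mono_lie le_top le_top).trans (lie_top_top_le_of_codisjoint hA hAP))
    (LieSubmodule.lie_le_right Q Q)

theorem isLieAbelian_of_isCompl {I J : LieIdeal R L} (hI : IsLieAbelian I) (hJ : IsLieAbelian J)
    (hIJ : IsCompl I J) : IsLieAbelian L := by
  rw [isLieAbelian_iff_lie_top_top_eq_bot (R := R), eq_bot_iff, ← disjoint_iff.mp hIJ.disjoint]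
  exact le_inf (lie_top_top_le_of_codisjoint hJ hIJ.codisjoint.symm)
    (lie_top_top_le_of_codisjoint hI hIJ.codisjoint)

end LieIdeal

open LieIdeal in
theorem isAlmostAbelian_and_isLieAbelian_of_not_le {F L : Type*} [Field F] [LieRing L]
    [LieAlgebra F L] {A P Q : LieIdeal F L} (hL : ¬IsLieAbelian L) (hA : IsLieAbelian A)
    (hrank : Module.rank F (L ⧸ A.toSubmodule) = 1) (hPQ : IsCompl P Q) (hPA : ¬P ≤ A) :
    IsAlmostAbelian F P ∧ IsLieAbelian Q := by
  have hAP : Codisjoint A P := LieSubmodule.codisjoint_toSubmodule.mp <|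
    Submodule.codisjoint_of_rank_quotient_eq_one hrank hPA
  have hQ : IsLieAbelian Q := isLieAbelian_of_codisjoint_of_disjoint hA hAP hPQ.disjoint
  refine ⟨⟨fun hP ↦ hL (isLieAbelian_of_isCompl hP hQ hPQ),
    A.comap P.incl, isLieAbelian_comap P.ker_incl hA, ?_⟩, hQ⟩
  rw [← hrank]
  exact Submodule.rank_quotient_comap_subtype_of_codisjoint
    (LieSubmodule.codisjoint_toSubmodule.mpr hAP.symm)

/-- If an almost Abelian Lie algebra decomposes as the direct sum of two ideals, then one summand
is almost Abelian and the other is Abelian. -/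
theorem stmt7 (F L : Type*) [Field F] [LieRing L] [LieAlgebra F L]
    (hL : IsAlmostAbelian F L) (I J : LieIdeal F L) (hdisj : I ⊓ J = ⊥) (hcodisj : I ⊔ J = ⊤) :
    (IsAlmostAbelian F I ∧ IsLieAbelian J) ∨ (IsAlmostAbelian F J ∧ IsLieAbelian I) := by
  obtain ⟨hnab, A, hA, hrank⟩ := hL
  have hIJ : IsCompl I J := ⟨disjoint_iff.mpr hdisj, codisjoint_iff.mpr hcodisj⟩
  by_cases hIA : I ≤ A
  · by_cases hJA : J ≤ A
    · exact absurd (LieIdeal.isLieAbelian_of_isCompl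
        ((LieIdeal.inclusion_injective hIA).isLieAbelian hA)
        ((LieIdeal.inclusion_injective hJA).isLieAbelian hA) hIJ) hnab
    · exact Or.inr (isAlmostAbelian_and_isLieAbelian_of_not_le hnab hA hrank hIJ.symm hJA)
  · exact Or.inl (isAlmostAbelian_and_isLieAbelian_of_not_le hnab hA hrank hIJ hIA)
end

section
/- Every almost Abelian Lie algebra L decomposes as L = L₀ ⊕ W where L₀ is an indecomposable almost Abelian Lie subalgebra and W is an Abelian ideal contained in the center; moreover any two such decompositions yield isomorphic L₀'s and isomorphic W's. -/
/-- A Lie algebra is indecomposable if it is not the direct sum of two nonzero ideals. -/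
def LieIndecomposable (F L : Type*) [Field F] [LieRing L] [LieAlgebra F L] : Prop :=
  ¬∃ (I J : LieIdeal F L), I ≠ ⊥ ∧ J ≠ ⊥ ∧ I ⊓ J = ⊥ ∧ I ⊔ J = ⊤

/-!
Write `Z` for the centre of `L` and `D = ⁅L, L⁆` for its derived algebra. If `L = A ⊕ W` with
`A` a subalgebra and `W` a central ideal, then brackets only see the `A`-components, so `D ≤ A`,
`A ≅ L ⧸ W`, and `Z(A) ≤ ⁅A, A⁆` exactly when `A ⊓ Z ≤ D`.

A non-Abelian indecomposable Lie algebra has `Z ≤ D`, since a central element outside `D` spans an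
ideal with an ideal complement containing `D`. Conversely, an almost Abelian Lie algebra with
`Z ≤ D` is indecomposable: in a splitting `I ⊕ J` one summand lies in the codimension one
Abelian ideal, so it is Abelian, hence central, hence contained in `Z ≤ D ≤` the other summand.

For existence, take `W` a complement of `Z ⊓ D` in `Z` and `A ⊇ D` a complement of `W`. For
uniqueness, every admissible `A` has `A ⊓ Z = D ⊓ Z`; by modularity `A'` is then a complement of
`W` and `A` one of `W'`, so `A ≅ L ⧸ W ≅ A'` and `W ≅ L ⧸ A ≅ W'`.
-/

open LieAlgebra LieModule

theorem isCompl_of_inf_eq_inf_of_le {α : Type*} [Lattice α] [BoundedOrder α]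
    [IsModularLattice α] {a w a' w' z : α} (h : IsCompl a w) (h' : IsCompl a' w') (hw : w ≤ z)
    (hw' : w' ≤ z) (ha : a ⊓ z = a' ⊓ z) : IsCompl a' w := by
  have ha' : a' ⊓ z ≤ a := ha ▸ inf_le_left
  have hz : z = w ⊔ a' ⊓ z := by
    rw [← ha, ← sup_inf_assoc_of_le a hw, h.symm.sup_eq_top, top_inf_eq]
  refine ⟨disjoint_iff_inf_le.mpr ?_, codisjoint_iff_le_sup.mpr ?_⟩
  · calc a' ⊓ w ≤ a ⊓ w := le_inf ((inf_le_inf_left a' hw).trans ha') inf_le_right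
      _ = ⊥ := h.inf_eq_bot
  · calc ⊤ = a' ⊔ w' := h'.sup_eq_top.symm
      _ ≤ a' ⊔ z := sup_le_sup_left hw' a'
      _ ≤ a' ⊔ w := by
        rw [hz]
        exact sup_le le_sup_left (sup_le le_sup_right (inf_le_left.trans le_sup_left))

theorem Submodule.exists_sub_smul_mem_of_rank_quotient_eq_one {F M : Type*} [Field F]
    [AddCommGroup M] [Module F M] {V : Submodule F M} (hV : Module.rank F (M ⧸ V) = 1)
    {x : M} (hx : x ∉ V) (y : M) : ∃ c : F, y - c • x ∈ V := by
  obtain ⟨c, hc⟩ :=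
    exists_smul_eq_of_finrank_eq_one (Module.rank_eq_one_iff_finrank_eq_one.mp hV) (x := V.mkQ x)
      (by simpa using hx) (V.mkQ y)
  exact ⟨c, (Submodule.Quotient.eq V).mp (by simpa using hc.symm)⟩

theorem Submodule.rank_quotient_comap_subtype_of_sup_eq_top {R M : Type*} [Ring R]
    [AddCommGroup M] [Module R M] {p q : Submodule R M} (h : p ⊔ q = ⊤) :
    Module.rank R (p ⧸ q.comap p.subtype) = Module.rank R (M ⧸ q) := by
  have hsurj : Function.Surjective (q.mkQ ∘ₗ p.subtype) := by
    rintro ⟨x⟩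
    obtain ⟨y, hy, z, hz, rfl⟩ := Submodule.mem_sup.mp (h ▸ Submodule.mem_top : x ∈ p ⊔ q)
    exact ⟨⟨y, hy⟩, (Submodule.Quotient.eq q).mpr (by simpa using hz)⟩
  have hker : LinearMap.ker (q.mkQ ∘ₗ p.subtype) = q.comap p.subtype := by
    rw [LinearMap.ker_comp, Submodule.ker_mkQ]
  rw [← hker]
  exact ((q.mkQ ∘ₗ p.subtype).quotKerEquivOfSurjective hsurj).rank_eq

section

variable {R L : Type*} [CommRing R] [LieRing L] [LieAlgebra R L]

theorem LieIdeal.lie_eq_zero_of_isLieAbelian {I : LieIdeal R L} [IsLieAbelian I] {x y : L}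
    (hx : x ∈ I) (hy : y ∈ I) : ⁅x, y⁆ = 0 :=
  congrArg Subtype.val (trivial_lie_zero I I ⟨x, hx⟩ ⟨y, hy⟩)

theorem LieIdeal.isLieAbelian_of_le {I J : LieIdeal R L} [IsLieAbelian J] (h : I ≤ J) :
    IsLieAbelian I :=
  ⟨fun x y => Subtype.ext (LieIdeal.lie_eq_zero_of_isLieAbelian (h x.2) (h y.2))⟩

theorem LieAlgebra.lie_eq_zero_of_mem_center_right {z : L} (hz : z ∈ center R L) (x : L) :
    ⁅x, z⁆ = 0 :=
  (mem_maxTrivSubmodule R L L z).mp hz x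

theorem LieAlgebra.lie_eq_zero_of_mem_center_left {z : L} (hz : z ∈ center R L) (x : L) :
    ⁅z, x⁆ = 0 := by
  rw [← lie_skew, lie_eq_zero_of_mem_center_right hz, neg_zero]

theorem LieHom.apply_mem_lie_top_top {L' : Type*} [LieRing L'] [LieAlgebra R L']
    (f : L →ₗ⁅R⁆ L') {x : L} (hx : x ∈ ⁅(⊤ : LieIdeal R L), (⊤ : LieIdeal R L)⁆) :
    f x ∈ ⁅(⊤ : LieIdeal R L'), (⊤ : LieIdeal R L')⁆ :=
  LieSubmodule.mono_lie le_top le_top (LieIdeal.map_bracket_le f (LieIdeal.mem_map hx))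

theorem eq_bot_of_isCompl_of_isLieAbelian
    (hZ : center R L ≤ ⁅(⊤ : LieIdeal R L), (⊤ : LieIdeal R L)⁆) {I J : LieIdeal R L}
    (hIJ : IsCompl I J) [IsLieAbelian J] : J = ⊥ := by
  have hJZ : J ≤ center R L := fun j hj => (mem_maxTrivSubmodule R L L j).mpr fun x => by
    obtain ⟨i, hi, j', hj', rfl⟩ :=
      (LieSubmodule.mem_sup I J x).mp (hIJ.sup_eq_top ▸ LieSubmodule.mem_top x)
    have hij : ⁅i, j⁆ ∈ I ⊓ J :=
      LieSubmodule.lie_le_inf I J (LieSubmodule.lie_mem_lie hi hj)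
    rw [hIJ.inf_eq_bot, LieSubmodule.mem_bot] at hij
    rw [add_lie, hij, LieIdeal.lie_eq_zero_of_isLieAbelian hj' hj, add_zero]
  have hJ : ⁅(⊤ : LieIdeal R L), J⁆ = ⊥ := (LieSubmodule.lie_eq_bot_iff _ _).mpr
    fun x _ _ hj => lie_eq_zero_of_mem_center_right (hJZ hj) x
  have hI : ⁅(⊤ : LieIdeal R L), I ⊔ J⁆ ≤ I := by
    rw [LieSubmodule.lie_sup, hJ, sup_bot_eq]
    exact LieSubmodule.lie_le_right I ⊤
  rw [hIJ.sup_eq_top] at hI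
  exact hIJ.symm.disjoint.eq_bot_of_le (hJZ.trans (hZ.trans hI))

end

namespace LieSubalgebra

variable {R L : Type*} [CommRing R] [LieRing L] [LieAlgebra R L] {A : LieSubalgebra R L}
  {I : LieIdeal R L}

noncomputable def equivQuotientOfIsCompl (h : IsCompl A.toSubmodule I.toSubmodule) :
    A ≃ₗ⁅R⁆ L ⧸ I :=
  LieEquiv.ofBijective
    { (I.toSubmodule.quotientEquivOfIsCompl A.toSubmodule h.symm).symm.toLinearMap with
      map_lie' := rfl }
    (I.toSubmodule.quotientEquivOfIsCompl A.toSubmodule h.symm).symm.bijective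

theorem lie_eq_lie_projectionOnto (h : IsCompl A.toSubmodule I.toSubmodule)
    (hI : I ≤ center R L) (x y : L) :
    ⁅x, y⁆ = ⁅(A.toSubmodule.projectionOnto I.toSubmodule h x : L),
      (A.toSubmodule.projectionOnto I.toSubmodule h y : L)⁆ := by
  set p := A.toSubmodule.projection I.toSubmodule h
  have hx : x - p x ∈ I := Submodule.sub_projection_mem h x
  have hy : y - p y ∈ I := Submodule.sub_projection_mem h y
  calc ⁅x, y⁆ = ⁅p x + (x - p x), p y + (y - p y)⁆ := by rw [add_sub_cancel, add_sub_cancel]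
    _ = ⁅p x, p y⁆ := by
      simp only [add_lie, lie_add, lie_eq_zero_of_mem_center_right (hI hy),
        lie_eq_zero_of_mem_center_left (hI hx), add_zero]

noncomputable def projOfIsCompl (h : IsCompl A.toSubmodule I.toSubmodule)
    (hI : I ≤ center R L) : L →ₗ⁅R⁆ A :=
  { A.toSubmodule.projectionOnto I.toSubmodule h with
    map_lie' := fun {x y} => by
      apply Subtype.ext
      rw [LinearMap.toFun_eq_coe, lie_eq_lie_projectionOnto h hI x y,
        Submodule.coe_projectionOnto_apply, Submodule.projection_apply_of_mem_left h
          (A.lie_mem (Submodule.coe_mem _) (Submodule.coe_mem _))]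
      rfl }

theorem projOfIsCompl_apply (h : IsCompl A.toSubmodule I.toSubmodule) (hI : I ≤ center R L)
    (a : A) : projOfIsCompl h hI a = a :=
  Submodule.projectionOnto_apply_left h a

theorem isLieAbelian_of_isCompl (h : IsCompl A.toSubmodule I.toSubmodule)
    (hI : I ≤ center R L) [IsLieAbelian A] : IsLieAbelian L :=
  ⟨fun x y => by
    rw [lie_eq_lie_projectionOnto h hI]
    exact congrArg Subtype.val (trivial_lie_zero A A _ _)⟩

theorem lie_top_top_le_of_isCompl (h : IsCompl A.toSubmodule I.toSubmodule)
    (hI : I ≤ center R L) :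
    (⁅(⊤ : LieIdeal R L), (⊤ : LieIdeal R L)⁆).toSubmodule ≤ A.toSubmodule := by
  rw [LieSubmodule.lieIdeal_oper_eq_linear_span', Submodule.span_le]
  rintro _ ⟨x, -, y, -, rfl⟩
  rw [SetLike.mem_coe, lie_eq_lie_projectionOnto h hI]
  exact A.lie_mem (Submodule.coe_mem _) (Submodule.coe_mem _)

theorem center_le_lie_top_top_iff_of_isCompl (h : IsCompl A.toSubmodule I.toSubmodule)
    (hI : I ≤ center R L) :
    center R A ≤ ⁅(⊤ : LieIdeal R A), (⊤ : LieIdeal R A)⁆ ↔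
      A.toSubmodule ⊓ (center R L).toSubmodule ≤
        (⁅(⊤ : LieIdeal R L), (⊤ : LieIdeal R L)⁆).toSubmodule := by
  constructor
  · rintro hA z ⟨hzA, hz⟩
    have hzA' : (⟨z, hzA⟩ : A) ∈ center R A := (mem_maxTrivSubmodule R A A _).mpr fun a =>
      Subtype.ext (lie_eq_zero_of_mem_center_right hz a)
    exact A.incl.apply_mem_lie_top_top (hA hzA')
  · intro hL z hz
    have hzL : (z : L) ∈ center R L := (mem_maxTrivSubmodule R L L _).mpr fun x => by
      rw [lie_eq_lie_projectionOnto h hI, Submodule.projectionOnto_apply_left]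
      exact congrArg Subtype.val (lie_eq_zero_of_mem_center_right hz _)
    simpa only [projOfIsCompl_apply] using
      (projOfIsCompl h hI).apply_mem_lie_top_top (hL ⟨z.2, hzL⟩)

end LieSubalgebra

section Field

variable {F L : Type*} [Field F] [LieRing L] [LieAlgebra F L]

theorem lieIndecomposable_iff_forall_isCompl :
    LieIndecomposable F L ↔ ∀ I J : LieIdeal F L, IsCompl I J → I = ⊥ ∨ J = ⊥ := by
  simp only [LieIndecomposable, isCompl_iff, disjoint_iff, codisjoint_iff, not_exists]
  grind

theorem LieIndecomposable.center_le_lie_top_top (h : LieIndecomposable F L)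
    (hL : ¬IsLieAbelian L) :
    center F L ≤ ⁅(⊤ : LieIdeal F L), (⊤ : LieIdeal F L)⁆ := by
  intro z hz
  by_contra hzD
  obtain ⟨H, hDH, hHz⟩ := (Submodule.disjoint_span_singleton_of_notMem hzD).exists_isCompl
  let I : LieIdeal F L :=
    { H with lie_mem := fun {x m} _ => hDH (LieSubmodule.lie_mem_lie (LieSubmodule.mem_top x)
        (LieSubmodule.mem_top m)) }
  let J : LieIdeal F L :=
    { F ∙ z with
      lie_mem := fun {x m} hm => by
        obtain ⟨c, rfl⟩ := Submodule.mem_span_singleton.mp hm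
        rw [lie_smul, lie_eq_zero_of_mem_center_right hz, smul_zero]
        exact Submodule.zero_mem _ }
  rcases lieIndecomposable_iff_forall_isCompl.mp h I J
    (LieSubmodule.isCompl_toSubmodule.mp hHz) with hI | hJ
  · refine hL ⟨fun x y => ?_⟩
    have : ⁅x, y⁆ ∈ I := hDH (LieSubmodule.lie_mem_lie (LieSubmodule.mem_top x)
        (LieSubmodule.mem_top y))
    rwa [hI, LieSubmodule.mem_bot] at this
  · have : z ∈ J := Submodule.mem_span_singleton_self z
    rw [hJ, LieSubmodule.mem_bot] at this
    exact hzD (this ▸ Submodule.zero_mem _)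

section AlmostAbelian

variable {V : LieIdeal F L} [IsLieAbelian V]

theorem LieIdeal.center_le_of_rank_quotient_eq_one (hV : Module.rank F (L ⧸ V) = 1)
    (hL : ¬IsLieAbelian L) : center F L ≤ V := by
  intro z hz
  by_contra hzV
  refine hL ⟨fun x y => ?_⟩
  obtain ⟨a, hx⟩ := Submodule.exists_sub_smul_mem_of_rank_quotient_eq_one hV hzV x
  obtain ⟨b, hy⟩ := Submodule.exists_sub_smul_mem_of_rank_quotient_eq_one hV hzV y
  calc ⁅x, y⁆ = ⁅x - a • z, y - b • z⁆ := by
        simp only [lie_sub, sub_lie, lie_smul, smul_lie, lie_eq_zero_of_mem_center_right hz,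
          lie_eq_zero_of_mem_center_left hz, smul_zero, sub_zero]
    _ = 0 := LieIdeal.lie_eq_zero_of_isLieAbelian hx hy

theorem LieIdeal.le_or_le_of_disjoint_of_rank_quotient_eq_one (hV : Module.rank F (L ⧸ V) = 1)
    (hL : ¬IsLieAbelian L) {I J : LieIdeal F L} (hIJ : Disjoint I J) : I ≤ V ∨ J ≤ V := by
  by_contra! ⟨hIV, hJV⟩
  obtain ⟨i, hi, hiV⟩ := Set.not_subset.mp hIV
  obtain ⟨j, hj, hjV⟩ := Set.not_subset.mp hJV
  obtain ⟨c, hc⟩ := Submodule.exists_sub_smul_mem_of_rank_quotient_eq_one hV hjV i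
  refine hiV (LieIdeal.center_le_of_rank_quotient_eq_one hV hL
    ((mem_maxTrivSubmodule F L L i).mpr fun y => ?_))
  obtain ⟨b, hy⟩ := Submodule.exists_sub_smul_mem_of_rank_quotient_eq_one hV hiV y
  have hvi : ⁅y - b • i, i⁆ = c • ⁅y - b • i, j⁆ := by
    rw [← lie_smul, ← sub_eq_zero, ← lie_sub]
    exact LieIdeal.lie_eq_zero_of_isLieAbelian hy hc
  have hmem : ⁅y - b • i, i⁆ ∈ I ⊓ J :=
    ⟨I.lie_mem hi, hvi ▸ J.smul_mem c (J.lie_mem hj)⟩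
  rw [hIJ.eq_bot, LieSubmodule.mem_bot, sub_lie, smul_lie, lie_self, smul_zero, sub_zero] at hmem
  exact hmem

end AlmostAbelian

theorem IsAlmostAbelian.lieIndecomposable_iff (h : IsAlmostAbelian F L) :
    LieIndecomposable F L ↔ center F L ≤ ⁅(⊤ : LieIdeal F L), (⊤ : LieIdeal F L)⁆ := by
  refine ⟨fun hind => hind.center_le_lie_top_top h.1, fun hZ => ?_⟩
  obtain ⟨hL, V, _, hV⟩ := h
  refine lieIndecomposable_iff_forall_isCompl.mpr fun I J hIJ => ?_
  rcases LieIdeal.le_or_le_of_disjoint_of_rank_quotient_eq_one hV hL hIJ.disjoint with hIV | hJV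
  · have := LieIdeal.isLieAbelian_of_le hIV
    exact Or.inl (eq_bot_of_isCompl_of_isLieAbelian hZ hIJ.symm)
  · have := LieIdeal.isLieAbelian_of_le hJV
    exact Or.inr (eq_bot_of_isCompl_of_isLieAbelian hZ hIJ)

theorem IsAlmostAbelian.of_isCompl (h : IsAlmostAbelian F L) {A : LieSubalgebra F L}
    {W : LieIdeal F L} (hAW : IsCompl A.toSubmodule W.toSubmodule) (hW : W ≤ center F L) :
    IsAlmostAbelian F A := by
  obtain ⟨hL, V, _, hV⟩ := h
  refine ⟨fun _ => hL (LieSubalgebra.isLieAbelian_of_isCompl hAW hW), LieIdeal.comap A.incl V,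
    ⟨fun x y => Subtype.ext <| Subtype.ext <|
      LieIdeal.lie_eq_zero_of_isLieAbelian (I := V) x.2 y.2⟩,
    ?_⟩
  have hWV : W.toSubmodule ≤ V.toSubmodule :=
    hW.trans (LieIdeal.center_le_of_rank_quotient_eq_one hV hL)
  have hAV : A.toSubmodule ⊔ V.toSubmodule = ⊤ :=
    top_unique (hAW.sup_eq_top.ge.trans (sup_le_sup_left hWV _))
  exact (Submodule.rank_quotient_comap_subtype_of_sup_eq_top hAV).trans hV

theorem exists_isCompl_inf_center_le_lie_top_top (F L : Type*) [Field F] [LieRing L]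
    [LieAlgebra F L] :
    ∃ (A : LieSubalgebra F L) (W : LieIdeal F L), IsCompl A.toSubmodule W.toSubmodule ∧
      W ≤ center F L ∧ A.toSubmodule ⊓ (center F L).toSubmodule ≤
        (⁅(⊤ : LieIdeal F L), (⊤ : LieIdeal F L)⁆).toSubmodule := by
  set Z := (center F L).toSubmodule
  set D := (⁅(⊤ : LieIdeal F L), (⊤ : LieIdeal F L)⁆).toSubmodule
  obtain ⟨W, hZDW, hZ⟩ :=
    IsModularLattice.exists_disjoint_and_sup_eq (inf_le_left : Z ⊓ D ≤ Z)
  have hWZ : W ≤ Z := hZ ▸ le_sup_right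
  have hDW : Disjoint D W := disjoint_iff_inf_le.mpr
    ((le_inf (le_inf (inf_le_right.trans hWZ) inf_le_left) inf_le_right).trans hZDW.le_bot)
  obtain ⟨A, hDA, hAW⟩ := hDW.exists_isCompl
  refine ⟨{ A with
      lie_mem' := fun {x y} _ _ => hDA (LieSubmodule.lie_mem_lie (LieSubmodule.mem_top x)
        (LieSubmodule.mem_top y)) },
    { W with
      lie_mem := fun {x m} hm => by
        rw [lie_eq_zero_of_mem_center_right (hWZ hm)]
        exact W.zero_mem },
    hAW, hWZ, ?_⟩
  show A ⊓ Z ≤ D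
  calc A ⊓ Z = A ⊓ (Z ⊓ D ⊔ W) := by rw [hZ]
    _ = Z ⊓ D ⊔ W ⊓ A := by rw [inf_comm, sup_inf_assoc_of_le W (inf_le_right.trans hDA)]
    _ ≤ D := by rw [hAW.symm.inf_eq_bot, sup_bot_eq]; exact inf_le_right

theorem LieSubalgebra.inf_center_eq_of_isCompl {A : LieSubalgebra F L} {W : LieIdeal F L}
    (hAW : IsCompl A.toSubmodule W.toSubmodule) (hW : W ≤ center F L)
    (hA : LieIndecomposable F A) (hAab : ¬IsLieAbelian A) :
    A.toSubmodule ⊓ (center F L).toSubmodule =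
      (⁅(⊤ : LieIdeal F L), (⊤ : LieIdeal F L)⁆).toSubmodule ⊓ (center F L).toSubmodule :=
  le_antisymm
    (le_inf ((center_le_lie_top_top_iff_of_isCompl hAW hW).mp
      (hA.center_le_lie_top_top hAab)) inf_le_right)
    (inf_le_inf_right _ (lie_top_top_le_of_isCompl hAW hW))

end Field

/-- Every almost Abelian Lie algebra decomposes as `L = L₀ ⊕ W` with `L₀` an indecomposable almost
Abelian subalgebra and `W` an Abelian ideal contained in the centre; any two such decompositions
have isomorphic `L₀`'s and isomorphic `W`'s. -/
theorem stmt9 (F L : Type*) [Field F] [LieRing L] [LieAlgebra F L]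
    (hL : IsAlmostAbelian F L) :
    ∃ (L₀ : LieSubalgebra F L) (W : LieIdeal F L),
      IsCompl L₀.toSubmodule W.toSubmodule ∧
      IsAlmostAbelian F L₀ ∧ LieIndecomposable F L₀ ∧
      IsLieAbelian W ∧ W ≤ LieAlgebra.center F L ∧
      ∀ (L₀' : LieSubalgebra F L) (W' : LieIdeal F L),
        IsCompl L₀'.toSubmodule W'.toSubmodule →
        IsAlmostAbelian F L₀' → LieIndecomposable F L₀' →
        IsLieAbelian W' → W' ≤ LieAlgebra.center F L →
          Nonempty ((L₀ : Type _) ≃ₗ⁅F⁆ (L₀' : Type _)) ∧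
          Nonempty ((W : Type _) ≃ₗ[F] (W' : Type _)) := by
  obtain ⟨A, W, hAW, hW, hAZ⟩ := exists_isCompl_inf_center_le_lie_top_top F L
  have hA : IsAlmostAbelian F A := hL.of_isCompl hAW hW
  have hAind : LieIndecomposable F A := hA.lieIndecomposable_iff.mpr
    ((LieSubalgebra.center_le_lie_top_top_iff_of_isCompl hAW hW).mpr hAZ)
  refine ⟨A, W, hAW, hA, hAind, abelian_of_le_center F L W hW, hW,
    fun A' W' hA'W' hA' hA'ind _ hW' => ?_⟩
  have hZ :
      A.toSubmodule ⊓ (center F L).toSubmodule = A'.toSubmodule ⊓ (center F L).toSubmodule :=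
    (LieSubalgebra.inf_center_eq_of_isCompl hAW hW hAind hA.1).trans
      (LieSubalgebra.inf_center_eq_of_isCompl hA'W' hW' hA'ind hA'.1).symm
  have hA'W : IsCompl A'.toSubmodule W.toSubmodule :=
    isCompl_of_inf_eq_inf_of_le hAW hA'W' hW hW' hZ
  have hAW' : IsCompl A.toSubmodule W'.toSubmodule :=
    isCompl_of_inf_eq_inf_of_le hA'W' hAW hW' hW hZ.symm
  exact ⟨⟨(LieSubalgebra.equivQuotientOfIsCompl hAW).trans
      (LieSubalgebra.equivQuotientOfIsCompl hA'W).symm⟩,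
    ⟨(Submodule.quotientEquivOfIsCompl _ _ hAW).symm ≪≫ₗ
      Submodule.quotientEquivOfIsCompl _ _ hAW'⟩⟩
end
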